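/- arXiv:1604.02180 — 2 statements merged into one kernel-verified Lean document; each statement's English description precedes it below -/
import Mathlib

section
/- Let R be a finite index set and let (L_r)_{r∈R} be mutually independent nonnegative real-valued random variables on a common probability space with 0 ≤ L_r ≤ m_r·n_r almost surely, where n_r are natural numbers and m_r are constants with 0 < m_r ≤ d for a constant d > 0. Suppose E[∑_{r∈R} L_r] ≤ d and set Δ_E := ∑_{r∈R} n_r². Then for every real n ≥ 1, P( ∑_{r∈R} L_r ≥ (1 + √(2·(log n)·Δ_E))·d ) ≤ n^{−4}. -/
/-!
Subtracting the means, the event forces `∑ r, (L r - 𝔼[L r]) ≥ s * d` with `s = √(2 log n Δ_E)`,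
because the means add up to at most `d`. Each `L r` ranges over an interval of width
`m r * n r ≤ d * n r`, so Hoeffding's inequality bounds the probability by
`exp (-2 (s d)² / ∑ (m r n r)²) ≤ exp (-2 s² / Δ_E) = n⁻⁴`. If all widths vanish, the loads are
almost surely zero and the event, which needs a load of at least `d > 0`, is null.
-/

open MeasureTheory ProbabilityTheory

open Real in
theorem measureReal_sum_integral_add_le_sum_le {Ω ι : Type*} [MeasurableSpace Ω] {μ : Measure Ω}
    {X : ι → Ω → ℝ} (hindep : iIndepFun X μ) (hmeas : ∀ i, AEMeasurable (X i) μ) {a b : ι → ℝ}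
    (hX : ∀ i, ∀ᵐ ω ∂μ, X i ω ∈ Set.Icc (a i) (b i)) (s : Finset ι) {ε : ℝ} (hε : 0 ≤ ε) :
    μ.real {ω | ∑ i ∈ s, μ[X i] + ε ≤ ∑ i ∈ s, X i ω}
      ≤ exp (-2 * ε ^ 2 / ∑ i ∈ s, (b i - a i) ^ 2) := by
  have := hindep.isProbabilityMeasure
  have hcentered : iIndepFun (fun i ω ↦ X i ω - μ[X i]) μ :=
    hindep.comp (fun i (y : ℝ) ↦ y - ∫ ω, X i ω ∂μ) fun i ↦ measurable_sub_const _
  have hoeffding := HasSubgaussianMGF.measure_sum_ge_le_of_iIndepFun hcentered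
    (fun i _ ↦ hasSubgaussianMGF_of_mem_Icc (hmeas i) (hX i)) (s := s) hε
  have hparam :
      ((∑ i ∈ s, (‖b i - a i‖₊ / 2) ^ 2 : NNReal) : ℝ) = (∑ i ∈ s, (b i - a i) ^ 2) / 4 := by
    push_cast
    simp only [Real.norm_eq_abs, div_pow, sq_abs, ← Finset.sum_div]
    norm_num
  convert hoeffding using 2
  · simp only [Finset.sum_sub_distrib, le_sub_iff_add_le']
  · rw [hparam]
    ring

theorem measure_le_sum_eq_zero_of_ae_nonpos {Ω ι : Type*} [MeasurableSpace Ω] {μ : Measure Ω}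
    {s : Finset ι} {X : ι → Ω → ℝ} (hX : ∀ i ∈ s, ∀ᵐ ω ∂μ, X i ω ≤ 0) {c : ℝ} (hc : 0 < c) :
    μ {ω | c ≤ ∑ i ∈ s, X i ω} = 0 := by
  rw [measure_eq_zero_iff_ae_notMem]
  filter_upwards [(Filter.eventually_all_finset s).mpr hX] with ω hω
  simpa using (Finset.sum_nonpos hω).trans_lt hc

open Real in
theorem exp_neg_two_mul_sq_div_le_rpow_neg_four {n d Δ B : ℝ} (hn : 1 ≤ n) (hB : 0 < B)
    (hBΔ : B ≤ d ^ 2 * Δ) :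
    exp (-2 * (√(2 * log n * Δ) * d) ^ 2 / B) ≤ n ^ (-4 : ℝ) := by
  have hΔ : 0 ≤ Δ := (pos_of_mul_pos_right (hB.trans_le hBΔ) (sq_nonneg d)).le
  have hlog : 0 ≤ log n := log_nonneg hn
  rw [rpow_def_of_pos (by linarith), exp_le_exp, mul_pow, sq_sqrt (by positivity),
    div_le_iff₀ hB]
  nlinarith [mul_le_mul_of_nonneg_left hBΔ hlog]

/-- Edge capacity violation bound: independent loads `L r ∈ [0, m r * n r]`, with
single virtual-edge demand `m r ≤ d` and `n r` virtual edges, expected load at most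
the capacity `d`.  With `Δ_E = ∑ (n r)²`, the probability of exceeding
`(1 + √(2 (log n) Δ_E)) d` is at most `n⁻⁴`. -/
theorem edge_capacity_violation {Ω : Type*} [MeasurableSpace Ω] (μ : Measure Ω)
    [IsProbabilityMeasure μ]
    {R : Type*} [Fintype R] (L : R → Ω → ℝ) (m : R → ℝ) (nE : R → ℕ) (d : ℝ)
    (hmeas : ∀ r, Measurable (L r))
    (hindep : iIndepFun L μ)
    (hbdd : ∀ r, ∀ᵐ ω ∂μ, 0 ≤ L r ω ∧ L r ω ≤ m r * (nE r : ℝ))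
    (hd : 0 < d)
    (hm : ∀ r, 0 < m r ∧ m r ≤ d)
    (hE : ∫ ω, ∑ r, L r ω ∂μ ≤ d) :
    ∀ n : ℝ, 1 ≤ n →
      μ {ω | (1 + Real.sqrt (2 * Real.log n * ∑ r, ((nE r : ℝ)) ^ 2)) * d ≤ ∑ r, L r ω}
        ≤ ENNReal.ofReal (n ^ (-4 : ℝ)) := by
  intro n hn
  set s := Real.sqrt (2 * Real.log n * ∑ r, ((nE r : ℝ)) ^ 2)
  set B := ∑ r, (m r * nE r - 0) ^ 2
  rcases (Finset.sum_nonneg fun r _ ↦ sq_nonneg _ : 0 ≤ B).eq_or_lt with hB | hB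
  · have hzero : ∀ r, m r * nE r = 0 := fun r ↦ by
      simpa using (Finset.sum_eq_zero_iff_of_nonneg fun r _ ↦ sq_nonneg _).mp hB.symm r
        (Finset.mem_univ r)
    refine (measure_le_sum_eq_zero_of_ae_nonpos (fun r _ ↦ ?_) (by positivity)).trans_le
      zero_le
    filter_upwards [hbdd r] with ω hω
    exact hω.2.trans (hzero r).le
  have hmean : ∑ r, μ[L r] ≤ d := by
    rwa [← integral_finsetSum _ fun r _ ↦
      Integrable.of_mem_Icc 0 _ (hmeas r).aemeasurable (hbdd r)]
  have hBΔ : B ≤ d ^ 2 * ∑ r, ((nE r : ℝ)) ^ 2 := by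
    rw [Finset.mul_sum]
    refine Finset.sum_le_sum fun r _ ↦ ?_
    rw [sub_zero, mul_pow]
    gcongr
    exacts [(hm r).1.le, (hm r).2]
  have hevent : {ω | (1 + s) * d ≤ ∑ r, L r ω} ⊆ {ω | ∑ r, μ[L r] + s * d ≤ ∑ r, L r ω} :=
    Set.ofPred_subset_ofPred.mpr fun ω hω ↦ by linarith
  calc _ ≤ μ {ω | ∑ r, μ[L r] + s * d ≤ ∑ r, L r ω} := measure_mono hevent
    _ = ENNReal.ofReal (μ.real {ω | ∑ r, μ[L r] + s * d ≤ ∑ r, L r ω}) :=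
        (ofReal_measureReal).symm
    _ ≤ _ := ENNReal.ofReal_le_ofReal <|
        (measureReal_sum_integral_add_le_sum_le hindep (fun r ↦ (hmeas r).aemeasurable) hbdd _
          (by positivity)).trans (exp_neg_two_mul_sq_div_le_rpow_neg_four hn hB hBΔ)
end

section
/- Let R be a finite index set and let (L_r)_{r∈R} be mutually independent nonnegative real-valued random variables on a common probability space with 0 ≤ L_r ≤ M_r almost surely for constants M_r ≥ 0. Let d > 0 and let m_r be constants with 0 < m_r ≤ d for every r ∈ R, and suppose E[∑_{r∈R} L_r] ≤ 2·d. Set Δ := ∑_{r∈R} (M_r / m_r)². Then for every real N ≥ 1, P( ∑_{r∈R} L_r ≥ (2 + √((log N)·Δ))·d ) ≤ N^{−2}. -/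
open MeasureTheory ProbabilityTheory

/-! Centre the loads and apply Hoeffding's inequality with deviation `ε = √(log N · Δ) · d`:
since `m r ≤ d`, the range widths satisfy `∑ M r ^ 2 ≤ Δ d ^ 2`, so the tail is at most
`exp (-2 ε ^ 2 / ∑ M r ^ 2) ≤ exp (-2 log N)`, while the expected load `≤ 2 d` absorbs the
remaining `2 d` of the threshold. -/

theorem measureReal_sum_ge_le_of_iIndepFun_of_mem_Icc {Ω ι : Type*} [MeasurableSpace Ω]
    {μ : Measure Ω} {X : ι → Ω → ℝ} {s : Finset ι} (h_indep : iIndepFun X μ)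
    (hX : ∀ i ∈ s, AEMeasurable (X i) μ) {a b : ι → ℝ}
    (h_mem : ∀ i ∈ s, ∀ᵐ ω ∂μ, X i ω ∈ Set.Icc (a i) (b i)) {ε : ℝ}
    (hε : 0 ≤ ε) :
    μ.real {ω | ∑ i ∈ s, μ[X i] + ε ≤ ∑ i ∈ s, X i ω}
      ≤ Real.exp (-2 * ε ^ 2 / ∑ i ∈ s, (b i - a i) ^ 2) := by
  have := h_indep.isProbabilityMeasure
  have h_centered : iIndepFun (fun i ω ↦ X i ω - μ[X i]) μ :=
    (h_indep.comp (fun i x ↦ x - μ[X i]) fun _ ↦ measurable_sub_const _ :)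
  have hoeffding := HasSubgaussianMGF.measure_sum_ge_le_of_iIndepFun h_centered
    (fun i hi ↦ hasSubgaussianMGF_of_mem_Icc (hX i hi) (h_mem i hi)) hε
  have h_event : {ω | ∑ i ∈ s, μ[X i] + ε ≤ ∑ i ∈ s, X i ω}
      = {ω | ε ≤ ∑ i ∈ s, (X i ω - μ[X i])} := by
    ext ω
    simp only [Set.mem_ofPred_eq, Finset.sum_sub_distrib]
    constructor <;> intro h <;> linarith
  have h_proxy : 2 * ((∑ i ∈ s, (‖b i - a i‖₊ / 2) ^ 2 : NNReal) : ℝ)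
      = (∑ i ∈ s, (b i - a i) ^ 2) / 2 := by
    push_cast
    rw [Finset.mul_sum, Finset.sum_div]
    refine Finset.sum_congr rfl fun i _ ↦ ?_
    rw [Real.norm_eq_abs, ← sq_abs (b i - a i)]
    ring
  rw [h_event]
  refine hoeffding.trans_eq ?_
  rw [h_proxy]
  ring_nf

theorem sum_sq_le_sum_div_sq_mul_sq {ι : Type*} (s : Finset ι) (M m : ι → ℝ) {d : ℝ}
    (hm : ∀ i ∈ s, 0 < m i ∧ m i ≤ d) :
    ∑ i ∈ s, M i ^ 2 ≤ (∑ i ∈ s, (M i / m i) ^ 2) * d ^ 2 := by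
  rw [Finset.sum_mul]
  refine Finset.sum_le_sum fun i hi ↦ ?_
  obtain ⟨hm_pos, hm_le⟩ := hm i hi
  calc M i ^ 2 = (M i / m i) ^ 2 * m i ^ 2 := by field_simp
    _ ≤ (M i / m i) ^ 2 * d ^ 2 := by gcongr

theorem exp_neg_two_mul_sq_div_le_rpow_neg_two {N Δ S d : ℝ} (hN : 1 ≤ N) (hS : 0 < S)
    (hSΔ : S ≤ Δ * d ^ 2) :
    Real.exp (-2 * (Real.sqrt (Real.log N * Δ) * d) ^ 2 / S) ≤ N ^ (-2 : ℝ) := by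
  have hlog : 0 ≤ Real.log N := Real.log_nonneg hN
  have hΔ : 0 ≤ Δ := (pos_of_mul_pos_left (hS.trans_le hSΔ) (sq_nonneg d)).le
  rw [Real.rpow_def_of_pos (by linarith), mul_pow, Real.sq_sqrt (mul_nonneg hlog hΔ),
    Real.exp_le_exp, div_le_iff₀ hS]
  nlinarith

theorem measure_le_sum_eq_zero_of_ae_le {Ω ι : Type*} [MeasurableSpace Ω] {μ : Measure Ω}
    {X : ι → Ω → ℝ} {s : Finset ι} {M : ι → ℝ} (hX : ∀ i ∈ s, ∀ᵐ ω ∂μ, X i ω ≤ M i)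
    {c : ℝ} (hc : ∑ i ∈ s, M i < c) :
    μ {ω | c ≤ ∑ i ∈ s, X i ω} = 0 := by
  rw [measure_eq_zero_iff_ae_notMem]
  filter_upwards [(Filter.eventually_all_finset s).2 hX] with ω hω
  exact not_le.2 ((Finset.sum_le_sum hω).trans_lt hc)

theorem node_capacity_violation_cost_general {Ω : Type*} [MeasurableSpace Ω] (μ : Measure Ω)
    [IsProbabilityMeasure μ]
    {R : Type*} [Fintype R] (L : R → Ω → ℝ) (M m : R → ℝ) (d : ℝ)
    (hmeas : ∀ r, Measurable (L r))
    (hindep : iIndepFun L μ)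
    (hbdd : ∀ r, ∀ᵐ ω ∂μ, 0 ≤ L r ω ∧ L r ω ≤ M r)
    (hd : 0 < d)
    (hm : ∀ r, 0 < m r ∧ m r ≤ d)
    (hE : ∫ ω, ∑ r, L r ω ∂μ ≤ 2 * d) :
    ∀ N : ℝ, 1 ≤ N →
      μ {ω | (2 + Real.sqrt (Real.log N * ∑ r, (M r / m r) ^ 2)) * d ≤ ∑ r, L r ω}
        ≤ ENNReal.ofReal (N ^ (-2 : ℝ)) := by
  intro N hN
  set s := Real.sqrt (Real.log N * ∑ r, (M r / m r) ^ 2)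
  have hs : 0 ≤ s * d := mul_nonneg (Real.sqrt_nonneg _) hd.le
  have hSΔ := sum_sq_le_sum_div_sq_mul_sq Finset.univ M m fun r _ ↦ hm r
  have hS₀ : 0 ≤ ∑ r, M r ^ 2 := by positivity
  rcases hS₀.eq_or_lt with hS | hS
  · -- Hoeffding's bound degenerates to `exp 0 = 1` here, but then the loads vanish a.s.
    have hM : ∀ r, M r = 0 := fun r ↦ by
      simpa using (Finset.sum_eq_zero_iff_of_nonneg fun r _ ↦ sq_nonneg (M r)).1 hS.symm r
    rw [measure_le_sum_eq_zero_of_ae_le (fun r _ ↦ (hbdd r).mono fun _ h ↦ h.2)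
      (by simp only [hM, Finset.sum_const_zero]; positivity)]
    exact zero_le
  have hL_mem : ∀ r ∈ Finset.univ, ∀ᵐ ω ∂μ, L r ω ∈ Set.Icc 0 (M r) :=
    fun r _ ↦ hbdd r
  have hE' : ∑ r, μ[L r] ≤ 2 * d := by
    rwa [← integral_finsetSum _ fun r _ ↦
      Integrable.of_mem_Icc 0 (M r) (hmeas r).aemeasurable (hbdd r)]
  calc μ {ω | (2 + s) * d ≤ ∑ r, L r ω}
      ≤ μ {ω | ∑ r, μ[L r] + s * d ≤ ∑ r, L r ω} :=
        measure_mono <| Set.ofPred_subset_ofPred.2 fun ω hω ↦ by linarith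
    _ = ENNReal.ofReal (μ.real {ω | ∑ r, μ[L r] + s * d ≤ ∑ r, L r ω}) :=
        (ofReal_measureReal).symm
    _ ≤ ENNReal.ofReal (N ^ (-2 : ℝ)) := by
      refine ENNReal.ofReal_le_ofReal <|
        le_trans ?_ (exp_neg_two_mul_sq_div_le_rpow_neg_two hN hS hSΔ)
      simpa using measureReal_sum_ge_le_of_iIndepFun_of_mem_Icc hindep
        (fun r _ ↦ (hmeas r).aemeasurable) hL_mem hs

/-- Node capacity violation bound in the cost-minimization variant: independent loads
`L r ∈ [0, M r]`, single-demand bounds `m r ≤ d`, expected total load at most `2 d`.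
With `Δ = ∑ (M r / m r)²`, the probability of exceeding `(2 + √((log N) Δ)) d` is at
most `N⁻²`. -/
theorem node_capacity_violation_cost {Ω : Type*} [MeasurableSpace Ω] (μ : Measure Ω)
    [IsProbabilityMeasure μ]
    {R : Type*} [Fintype R] (L : R → Ω → ℝ) (M m : R → ℝ) (d : ℝ)
    (hmeas : ∀ r, Measurable (L r))
    (hindep : iIndepFun L μ)
    (hM : ∀ r, 0 ≤ M r)
    (hbdd : ∀ r, ∀ᵐ ω ∂μ, 0 ≤ L r ω ∧ L r ω ≤ M r)
    (hd : 0 < d)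
    (hm : ∀ r, 0 < m r ∧ m r ≤ d)
    (hE : ∫ ω, ∑ r, L r ω ∂μ ≤ 2 * d) :
    ∀ N : ℝ, 1 ≤ N →
      μ {ω | (2 + Real.sqrt (Real.log N * ∑ r, (M r / m r) ^ 2)) * d ≤ ∑ r, L r ω}
        ≤ ENNReal.ofReal (N ^ (-2 : ℝ)) :=
  node_capacity_violation_cost_general μ L M m d hmeas hindep hbdd hd hm hE
end
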